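/- arXiv:2604.19725 — 2 statements merged into one kernel-verified Lean document; each statement's English description precedes it below -/
import Mathlib

section
/- Let Z be the moment generating function of a probability density p₀ with respect to μ, finite on all of ℝ, and let κ = log Z. For any complex θ, |Z(θ)| ≥ Z(Re θ)·(1 - (Im θ)² κ''(Re θ)/2), where Z(θ) = ∫ exp(θx) p₀(x) dμ(x) for complex θ. -/
open MeasureTheory

lemma my_exp_abs_add_le (a s x : ℝ) :
    Real.exp (a * |x| + s * x) ≤ Real.exp ((s + a) * x) + Real.exp ((s - a) * x) := by
  rcases le_or_gt 0 x with h | h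
  · rw [abs_of_nonneg h, show a * x + s * x = (s + a) * x by ring]
    exact le_add_of_nonneg_right (Real.exp_pos _).le
  · rw [abs_of_neg h, show a * -x + s * x = (s - a) * x by ring]
    exact le_add_of_nonneg_left (Real.exp_pos _).le

lemma my_pow_mul_exp_le (n : ℕ) (b c s₀ s x : ℝ) (hc : |s - s₀| ≤ c)
    (hb : (n : ℝ) + c ≤ b) :
    |x| ^ n * Real.exp (s * x) ≤ Real.exp ((s₀ + b) * x) + Real.exp ((s₀ - b) * x) := by
  have hc0 : 0 ≤ c := (abs_nonneg _).trans hc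
  have h1 : |x| ^ n ≤ Real.exp ((n : ℝ) * |x|) := by
    rw [Real.exp_nat_mul]
    exact pow_le_pow_left₀ (abs_nonneg x) (by linarith [Real.add_one_le_exp |x|]) n
  have h2 : Real.exp (s * x) ≤ Real.exp (c * |x| + s₀ * x) := by
    apply Real.exp_le_exp.2
    have h3 : (s - s₀) * x ≤ c * |x| := by
      calc (s - s₀) * x ≤ |(s - s₀) * x| := le_abs_self _
        _ = |s - s₀| * |x| := abs_mul _ _
        _ ≤ c * |x| := mul_le_mul_of_nonneg_right hc (abs_nonneg x)
    nlinarith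
  calc |x| ^ n * Real.exp (s * x)
      ≤ Real.exp ((n : ℝ) * |x|) * Real.exp (c * |x| + s₀ * x) :=
        mul_le_mul h1 h2 (Real.exp_pos _).le (Real.exp_nonneg _)
    _ = Real.exp (((n : ℝ) + c) * |x| + s₀ * x) := by rw [← Real.exp_add]; ring_nf
    _ ≤ Real.exp (b * |x| + s₀ * x) := by
        apply Real.exp_le_exp.2
        nlinarith [abs_nonneg x]
    _ ≤ _ := my_exp_abs_add_le b s₀ x

lemma my_integrable_pow_mul_exp {μ : Measure ℝ} {p₀ : ℝ → ℝ}
    (hp₀_nonneg : ∀ x, 0 ≤ p₀ x) (hp₀_meas : Measurable p₀)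
    (hfin : ∀ s : ℝ, Integrable (fun x => Real.exp (s * x) * p₀ x) μ)
    (n : ℕ) (s : ℝ) :
    Integrable (fun x => x ^ n * Real.exp (s * x) * p₀ x) μ := by
  have hg : Integrable
      (fun x => Real.exp ((s + n) * x) * p₀ x + Real.exp ((s - n) * x) * p₀ x) μ :=
    (hfin _).add (hfin _)
  refine hg.mono' ?_ (Filter.Eventually.of_forall fun x => ?_)
  · exact (((measurable_id.pow_const n).mul
      (Real.measurable_exp.comp (measurable_const_mul s))).mul hp₀_meas).aestronglyMeasurable
  · have key := my_pow_mul_exp_le n n 0 s s x (by simp) (by simp)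
    have := mul_le_mul_of_nonneg_right key (hp₀_nonneg x)
    rw [Real.norm_eq_abs, abs_mul, abs_mul, abs_pow,
      Real.abs_exp, abs_of_nonneg (hp₀_nonneg x)]
    nlinarith [hp₀_nonneg x]

lemma my_hasDerivAt_integral {μ : Measure ℝ} {p₀ : ℝ → ℝ}
    (hp₀_nonneg : ∀ x, 0 ≤ p₀ x) (hp₀_meas : Measurable p₀)
    (hfin : ∀ s : ℝ, Integrable (fun x => Real.exp (s * x) * p₀ x) μ)
    (n : ℕ) (s₀ : ℝ) :
    HasDerivAt (fun s => ∫ x, x ^ n * Real.exp (s * x) * p₀ x ∂μ)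
      (∫ x, x ^ (n + 1) * Real.exp (s₀ * x) * p₀ x ∂μ) s₀ := by
  have meas : ∀ (k : ℕ) (s : ℝ),
      AEStronglyMeasurable (fun x => x ^ k * Real.exp (s * x) * p₀ x) μ := fun k s =>
    (((measurable_id.pow_const k).mul
      (Real.measurable_exp.comp (measurable_const_mul s))).mul hp₀_meas).aestronglyMeasurable
  have key := hasDerivAt_integral_of_dominated_loc_of_deriv_le
    (μ := μ) (x₀ := s₀) (s := Metric.ball s₀ 1)
    (F := fun s x => x ^ n * Real.exp (s * x) * p₀ x)
    (F' := fun s x => x ^ (n + 1) * Real.exp (s * x) * p₀ x)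
    (bound := fun x => Real.exp ((s₀ + (n + 2)) * x) * p₀ x
      + Real.exp ((s₀ - (n + 2)) * x) * p₀ x)
    (Metric.ball_mem_nhds s₀ one_pos)
    (Filter.Eventually.of_forall fun s => meas n s)
    (my_integrable_pow_mul_exp hp₀_nonneg hp₀_meas hfin n s₀)
    (meas (n + 1) s₀)
    (Filter.Eventually.of_forall fun x => fun s hs => ?_)
    ((hfin _).add (hfin _))
    (Filter.Eventually.of_forall fun x => fun s _ => ?_)
  · exact key.2
  · -- bound
    have hs' : |s - s₀| ≤ 1 := by
      rw [Metric.mem_ball, Real.dist_eq] at hs; exact hs.le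
    have key2 := my_pow_mul_exp_le (n + 1) ((n : ℝ) + 2) 1 s₀ s x hs' (by push_cast; linarith)
    have := mul_le_mul_of_nonneg_right key2 (hp₀_nonneg x)
    simp only [Real.norm_eq_abs, abs_mul, abs_pow, Real.abs_exp,
      abs_of_nonneg (hp₀_nonneg x)]
    nlinarith [hp₀_nonneg x]
  · -- differentiability
    have h : HasDerivAt (fun s : ℝ => s * x) x s := hasDerivAt_mul_const x
    have h2 : HasDerivAt (fun s : ℝ => x ^ n * Real.exp (s * x) * p₀ x)
        (x ^ n * (Real.exp (s * x) * x) * p₀ x) s := (h.exp.const_mul (x ^ n)).mul_const (p₀ x)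
    refine h2.congr_deriv ?_
    ring
/-- Lower bound on the modulus of the complex moment generating function. -/
theorem abs_complex_mgf_ge
    (μ : Measure ℝ)
    (p₀ : ℝ → ℝ) (hp₀_nonneg : ∀ x, 0 ≤ p₀ x)
    (hp₀_meas : Measurable p₀)
    (hp₀_prob : ∫ x, p₀ x ∂μ = 1)
    (hfin : ∀ s : ℝ, Integrable (fun x => Real.exp (s * x) * p₀ x) μ)
    (Zr : ℝ → ℝ) (hZr : ∀ s, Zr s = ∫ x, Real.exp (s * x) * p₀ x ∂μ)
    (Zc : ℂ → ℂ) (hZc : ∀ θ : ℂ, Zc θ = ∫ x, Complex.exp (θ * x) * (p₀ x : ℂ) ∂μ)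
    (κ : ℝ → ℝ) (hκ : ∀ s, κ s = Real.log (Zr s))
    (θ : ℂ) :
    ‖Zc θ‖ ≥ Zr θ.re * (1 - θ.im ^ 2 * deriv (deriv κ) θ.re / 2) := by
  have hA : ∀ (n : ℕ) (s : ℝ), Integrable (fun x => x ^ n * Real.exp (s * x) * p₀ x) μ :=
    my_integrable_pow_mul_exp hp₀_nonneg hp₀_meas hfin
  have hD := my_hasDerivAt_integral hp₀_nonneg hp₀_meas hfin
  set s₀ := θ.re with hs₀
  set t := θ.im with ht
  -- positivity of the real mgf
  have hMpos : ∀ s : ℝ, 0 < ∫ x, Real.exp (s * x) * p₀ x ∂μ := by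
    intro s
    rcases lt_or_eq_of_le (integral_nonneg (f := fun x => Real.exp (s * x) * p₀ x) fun x =>
      mul_nonneg (Real.exp_pos _).le (hp₀_nonneg x)) with h | h
    · exact h
    · exfalso
      have h0 : (fun x => Real.exp (s * x) * p₀ x) =ᵐ[μ] 0 :=
        (integral_eq_zero_iff_of_nonneg
          (fun x => mul_nonneg (Real.exp_pos _).le (hp₀_nonneg x)) (hfin s)).1 h.symm
      have hp0 : p₀ =ᵐ[μ] 0 := by
        filter_upwards [h0] with x hx
        have := hx
        simp only [Pi.zero_apply] at this ⊢
        rcases mul_eq_zero.1 this with h' | h'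
        · exact absurd h' (Real.exp_ne_zero _)
        · exact h'
      have hz : ∫ x, p₀ x ∂μ = 0 := by
        rw [integral_congr_ae hp0]; simp
      rw [hp₀_prob] at hz
      norm_num at hz
  -- derivative facts
  have hD0 : ∀ s : ℝ, HasDerivAt (fun s => ∫ x, Real.exp (s * x) * p₀ x ∂μ)
      (∫ x, x * Real.exp (s * x) * p₀ x ∂μ) s := by
    intro s
    have := hD 0 s
    simpa using this
  have hD1 : HasDerivAt (fun s => ∫ x, x * Real.exp (s * x) * p₀ x ∂μ)
      (∫ x, x ^ 2 * Real.exp (s₀ * x) * p₀ x ∂μ) s₀ := by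
    have := hD 1 s₀
    norm_num at this
    exact this
  -- κ and its derivatives
  have hκeq : κ = fun s => Real.log (∫ x, Real.exp (s * x) * p₀ x ∂μ) :=
    funext fun s => by rw [hκ, hZr]
  have hκ' : ∀ s : ℝ, HasDerivAt κ
      ((∫ x, x * Real.exp (s * x) * p₀ x ∂μ) / (∫ x, Real.exp (s * x) * p₀ x ∂μ)) s := by
    intro s
    rw [hκeq]
    exact (hD0 s).log (hMpos s).ne'
  have hderivκ : deriv κ = fun s =>
      (∫ x, x * Real.exp (s * x) * p₀ x ∂μ) / (∫ x, Real.exp (s * x) * p₀ x ∂μ) :=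
    funext fun s => (hκ' s).deriv
  set A0 := ∫ x, Real.exp (s₀ * x) * p₀ x ∂μ with hA0
  set A1 := ∫ x, x * Real.exp (s₀ * x) * p₀ x ∂μ with hA1
  set A2 := ∫ x, x ^ 2 * Real.exp (s₀ * x) * p₀ x ∂μ with hA2
  have hA0pos : 0 < A0 := hMpos s₀
  have hκ'' : deriv (deriv κ) s₀ = (A2 * A0 - A1 * A1) / A0 ^ 2 := by
    rw [hderivκ]
    exact (hD1.div (hD0 s₀) hA0pos.ne').deriv
  set m := A1 / A0 with hm
  -- complex part
  set c : ℂ := -(((t * m : ℝ) : ℂ) * Complex.I) with hc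
  have hcre : c.re = 0 := by simp [hc]
  have hcim : c.im = -(t * m) := by simp [hc]
  have hwre : ∀ x : ℝ, (θ * x + c).re = s₀ * x := by
    intro x; simp [Complex.add_re, Complex.mul_re, hcre, hs₀, mul_comm]
  have hwim : ∀ x : ℝ, (θ * x + c).im = t * x - t * m := by
    intro x
    simp [Complex.add_im, Complex.mul_im, hcim, ht]
    ring
  have hmeasC : AEStronglyMeasurable (fun x : ℝ => Complex.exp (θ * x + c) * (p₀ x : ℂ)) μ := by
    apply Measurable.aestronglyMeasurable
    exact (Complex.measurable_exp.comp
      ((measurable_const.mul Complex.measurable_ofReal).add_const c)).mul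
      (Complex.measurable_ofReal.comp hp₀_meas)
  have hnorm : ∀ x : ℝ, ‖Complex.exp (θ * x + c) * (p₀ x : ℂ)‖ = Real.exp (s₀ * x) * p₀ x := by
    intro x
    rw [norm_mul, Complex.norm_exp,
      Complex.norm_real, Real.norm_eq_abs, abs_of_nonneg (hp₀_nonneg x), hwre]
  have hintC : Integrable (fun x : ℝ => Complex.exp (θ * x + c) * (p₀ x : ℂ)) μ :=
    (hfin s₀).mono' hmeasC (Filter.Eventually.of_forall fun x => (hnorm x).le)
  -- |Zc θ| ≥ real part of rotated integral
  have habs : ‖Zc θ‖ = ‖Complex.exp c * Zc θ‖ := by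
    rw [norm_mul, Complex.norm_exp, hcre, Real.exp_zero, one_mul]
  have hre_eq : (Complex.exp c * Zc θ).re
      = ∫ x, Real.exp (s₀ * x) * Real.cos (t * x - t * m) * p₀ x ∂μ := by
    rw [hZc, ← integral_const_mul]
    have hfeq : ∀ x : ℝ, Complex.exp c * (Complex.exp (θ * x) * (p₀ x : ℂ))
        = Complex.exp (θ * x + c) * (p₀ x : ℂ) := by
      intro x; rw [Complex.exp_add]; ring
    simp_rw [hfeq]
    have := integral_re (μ := μ) (𝕜 := ℂ) hintC
    simp only [RCLike.re_to_complex] at this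
    rw [← this]
    congr 1
    funext x
    rw [Complex.mul_re]
    simp only [Complex.ofReal_re, Complex.ofReal_im, mul_zero, sub_zero]
    rw [Complex.exp_re, hwre, hwim]
  have hre_le : (Complex.exp c * Zc θ).re ≤ ‖Zc θ‖ := by
    rw [habs]; exact Complex.re_le_norm _
  -- integrability of the two real integrands
  have hA1' : Integrable (fun x => x * Real.exp (s₀ * x) * p₀ x) μ := by
    have := hA 1 s₀; simpa using this
  have hA2' : Integrable (fun x => x ^ 2 * Real.exp (s₀ * x) * p₀ x) μ := hA 2 s₀
  have hcos_int : Integrable (fun x => Real.exp (s₀ * x) * Real.cos (t * x - t * m) * p₀ x) μ := by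
    refine (hfin s₀).mono' ?_ (Filter.Eventually.of_forall fun x => ?_)
    · exact ((Real.measurable_exp.comp (measurable_const_mul s₀)).mul
        (Real.measurable_cos.comp ((measurable_const_mul t).sub_const (t * m)))).mul
        hp₀_meas |>.aestronglyMeasurable
    · rw [Real.norm_eq_abs, abs_mul, abs_mul, Real.abs_exp, abs_of_nonneg (hp₀_nonneg x)]
      have h1 : |Real.cos (t * x - t * m)| ≤ 1 := Real.abs_cos_le_one _
      have h2 : Real.exp (s₀ * x) * |Real.cos (t * x - t * m)| * p₀ x
          ≤ Real.exp (s₀ * x) * 1 * p₀ x :=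
        mul_le_mul_of_nonneg_right
          (mul_le_mul_of_nonneg_left h1 (Real.exp_pos _).le) (hp₀_nonneg x)
      simpa using h2
  have hquad_eq : (fun x => Real.exp (s₀ * x) * (1 - (t * x - t * m) ^ 2 / 2) * p₀ x)
      = fun x => (Real.exp (s₀ * x) * p₀ x - t ^ 2 / 2 * (x ^ 2 * Real.exp (s₀ * x) * p₀ x)
          + t ^ 2 * m * (x * Real.exp (s₀ * x) * p₀ x))
          - t ^ 2 * m ^ 2 / 2 * (Real.exp (s₀ * x) * p₀ x) := funext fun x => by ring
  have i2 : Integrable (fun x => t ^ 2 / 2 * (x ^ 2 * Real.exp (s₀ * x) * p₀ x)) μ :=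
    hA2'.const_mul _
  have i3 : Integrable (fun x => t ^ 2 * m * (x * Real.exp (s₀ * x) * p₀ x)) μ :=
    hA1'.const_mul _
  have i4 : Integrable (fun x => t ^ 2 * m ^ 2 / 2 * (Real.exp (s₀ * x) * p₀ x)) μ :=
    (hfin s₀).const_mul _
  have i12 : Integrable (fun x => Real.exp (s₀ * x) * p₀ x
      - t ^ 2 / 2 * (x ^ 2 * Real.exp (s₀ * x) * p₀ x)) μ := (hfin s₀).sub i2
  have i123 : Integrable (fun x => Real.exp (s₀ * x) * p₀ x
      - t ^ 2 / 2 * (x ^ 2 * Real.exp (s₀ * x) * p₀ x)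
      + t ^ 2 * m * (x * Real.exp (s₀ * x) * p₀ x)) μ := i12.add i3
  have hquad_int : Integrable (fun x => Real.exp (s₀ * x) * (1 - (t * x - t * m) ^ 2 / 2) * p₀ x) μ := by
    rw [hquad_eq]
    exact i123.sub i4
  have hquad_val : ∫ x, Real.exp (s₀ * x) * (1 - (t * x - t * m) ^ 2 / 2) * p₀ x ∂μ
      = A0 - t ^ 2 / 2 * A2 + t ^ 2 * m * A1 - t ^ 2 * m ^ 2 / 2 * A0 := by
    rw [hquad_eq, integral_sub i123 i4, integral_add i12 i3, integral_sub (hfin s₀) i2,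
      integral_const_mul, integral_const_mul, integral_const_mul]
  have hmono : ∫ x, Real.exp (s₀ * x) * (1 - (t * x - t * m) ^ 2 / 2) * p₀ x ∂μ
      ≤ ∫ x, Real.exp (s₀ * x) * Real.cos (t * x - t * m) * p₀ x ∂μ := by
    refine integral_mono hquad_int hcos_int fun x => ?_
    have h1 := Real.one_sub_sq_div_two_le_cos (x := t * x - t * m)
    have h2 := mul_le_mul_of_nonneg_left h1 (Real.exp_pos (s₀ * x)).le
    exact mul_le_mul_of_nonneg_right h2 (hp₀_nonneg x)
  -- put it together
  rw [ge_iff_le, hZr, hκ'']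
  have halg : A0 * (1 - t ^ 2 * ((A2 * A0 - A1 * A1) / A0 ^ 2) / 2)
      = A0 - t ^ 2 / 2 * A2 + t ^ 2 * m * A1 - t ^ 2 * m ^ 2 / 2 * A0 := by
    rw [hm]
    field_simp
    ring
  rw [halg, ← hquad_val]
  exact hmono.trans (hre_eq ▸ hre_le)
end

section
/- Let g be a probability measure on ℝ supported in [-M, M], and define l_g(z) = ∫ exp(θ z - κ(θ)) dg(θ) for complex z, where κ: [-M, M] → ℝ is measurable and bounded. Then for any complex z with |Im z| ≤ π/(4M), |log l_g(z)| ≤ |Re z|·M + sup_{|θ|≤M}|κ(θ)| + log(1/cos(|Im z| M)) + π/2, where log is the principal branch (well-defined since Re l_g(z) > 0). -/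
open MeasureTheory

/-- Bound on the principal logarithm of the mixture likelihood ratio on a
complex strip. -/
theorem log_mixture_likelihood_bound
    (M : ℝ) (hM : 0 < M)
    (g : Measure ℝ) [IsProbabilityMeasure g]
    (hsupp : g (Set.Icc (-M) M)ᶜ = 0)
    (κ : ℝ → ℝ) (hκ_meas : Measurable κ)
    (hκ_bdd : BddAbove ((fun θ => |κ θ|) '' Set.Icc (-M) M))
    (l : ℂ → ℂ)
    (hl : ∀ z : ℂ, l z = ∫ θ, Complex.exp (θ * z - (κ θ : ℂ)) ∂g)
    (z : ℂ) (hz : |z.im| ≤ Real.pi / (4 * M)) :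
    ‖Complex.log (l z)‖
      ≤ |z.re| * M + sSup ((fun θ => |κ θ|) '' Set.Icc (-M) M)
        + Real.log (1 / Real.cos (|z.im| * M)) + Real.pi / 2 := by
  set K := sSup ((fun θ => |κ θ|) '' Set.Icc (-M) M) with hK
  have hmem0 : (0 : ℝ) ∈ Set.Icc (-M) M := ⟨by linarith, by linarith⟩
  have hκK : ∀ θ ∈ Set.Icc (-M) M, |κ θ| ≤ K := fun θ hθ =>
    le_csSup hκ_bdd ⟨θ, hθ, rfl⟩
  have hK0 : 0 ≤ K := le_trans (abs_nonneg _) (hκK 0 hmem0)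
  set A := |z.re| * M with hA
  have hA0 : 0 ≤ A := mul_nonneg (abs_nonneg _) hM.le
  set b := |z.im| with hb
  have hb0 : 0 ≤ b := abs_nonneg _
  have hpipos := Real.pi_pos
  have hbM : b * M ≤ Real.pi / 4 := by
    have h1 := mul_le_mul_of_nonneg_right hz hM.le
    have h2 : Real.pi / (4 * M) * M = Real.pi / 4 := by
      field_simp
    rw [h2] at h1; exact h1
  have hbM0 : 0 ≤ b * M := mul_nonneg hb0 hM.le
  have hcos : 0 < Real.cos (b * M) :=
    Real.cos_pos_of_mem_Ioo ⟨by linarith, by linarith⟩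
  have hcos1 : Real.cos (b * M) ≤ 1 := Real.cos_le_one _
  -- a.e. membership in the support interval
  have hae : ∀ᵐ θ ∂g, θ ∈ Set.Icc (-M) M := by
    rw [MeasureTheory.ae_iff]
    exact hsupp
  -- real/imaginary parts of the exponent
  have hre : ∀ θ : ℝ, ((θ : ℂ) * z - (κ θ : ℂ)).re = θ * z.re - κ θ := by
    intro θ; simp
  have him : ∀ θ : ℝ, ((θ : ℂ) * z - (κ θ : ℂ)).im = θ * z.im := by
    intro θ; simp
  have hbound : ∀ θ ∈ Set.Icc (-M) M, |θ * z.re - κ θ| ≤ A + K := by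
    intro θ hθ
    have h1 : |θ| ≤ M := abs_le.mpr ⟨hθ.1, hθ.2⟩
    have h2 : |θ * z.re| ≤ A := by
      rw [abs_mul]
      calc |θ| * |z.re| ≤ M * |z.re| :=
            mul_le_mul_of_nonneg_right h1 (abs_nonneg _)
        _ = A := by rw [hA]; ring
    calc |θ * z.re - κ θ| ≤ |θ * z.re| + |κ θ| := abs_sub _ _
      _ ≤ A + K := add_le_add h2 (hκK θ hθ)
  have hmeas : Measurable fun θ : ℝ => Complex.exp ((θ : ℂ) * z - (κ θ : ℂ)) := by
    fun_prop
  have hint : Integrable (fun θ : ℝ => Complex.exp ((θ : ℂ) * z - (κ θ : ℂ))) g := by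
    apply Integrable.mono' (integrable_const (Real.exp (A + K)))
      hmeas.aestronglyMeasurable
    filter_upwards [hae] with θ hθ
    rw [Complex.norm_exp, hre]
    exact Real.exp_le_exp.mpr (le_trans (le_abs_self _) (hbound θ hθ))
  -- upper bound on |l z|
  have hupper : ‖l z‖ ≤ Real.exp (A + K) := by
    rw [hl]
    calc ‖∫ θ, Complex.exp ((θ : ℂ) * z - (κ θ : ℂ)) ∂g‖
        ≤ ∫ θ, ‖Complex.exp ((θ : ℂ) * z - (κ θ : ℂ))‖ ∂g := by
          exact
            norm_integral_le_integral_norm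
              (fun θ : ℝ => Complex.exp ((θ : ℂ) * z - (κ θ : ℂ))) (μ := g)
      _ ≤ ∫ _θ, Real.exp (A + K) ∂g := by
          apply integral_mono_ae hint.norm (integrable_const _)
          filter_upwards [hae] with θ hθ
          rw [Complex.norm_exp, hre]
          exact Real.exp_le_exp.mpr (le_trans (le_abs_self _) (hbound θ hθ))
      _ = Real.exp (A + K) := by simp
  -- lower bound on the real part
  have hrel : Real.exp (-(A + K)) * Real.cos (b * M) ≤ (l z).re := by
    have hintre := integral_re (𝕜 := ℂ) hint
    simp only [RCLike.re_to_complex] at hintre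
    rw [hl, ← hintre]
    calc Real.exp (-(A + K)) * Real.cos (b * M)
        = ∫ _θ, Real.exp (-(A + K)) * Real.cos (b * M) ∂g := by simp
      _ ≤ ∫ θ, (Complex.exp ((θ : ℂ) * z - (κ θ : ℂ))).re ∂g := by
          apply integral_mono_ae (integrable_const _) hint.re
          filter_upwards [hae] with θ hθ
          simp only [RCLike.re_to_complex]
          rw [Complex.exp_re, hre, him]
          have h1 : |θ| ≤ M := abs_le.mpr ⟨hθ.1, hθ.2⟩
          have hcosθ : Real.cos (b * M) ≤ Real.cos (θ * z.im) := by
            rw [← Real.cos_abs (θ * z.im)]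
            apply Real.cos_le_cos_of_nonneg_of_le_pi (abs_nonneg _)
              (by linarith)
            calc |θ * z.im| = |θ| * b := by rw [abs_mul]
              _ ≤ M * b := mul_le_mul_of_nonneg_right h1 hb0
              _ = b * M := mul_comm _ _
          have hexpθ : Real.exp (-(A + K)) ≤ Real.exp (θ * z.re - κ θ) :=
            Real.exp_le_exp.mpr (neg_le_of_abs_le (hbound θ hθ))
          exact mul_le_mul hexpθ hcosθ hcos.le (Real.exp_pos _).le
  have hwre : 0 < (l z).re :=
    lt_of_lt_of_le (mul_pos (Real.exp_pos _) hcos) hrel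
  have habs_pos : 0 < ‖l z‖ :=
    lt_of_lt_of_le hwre (Complex.re_le_norm _)
  have hlower : Real.exp (-(A + K)) * Real.cos (b * M) ≤ ‖l z‖ :=
    le_trans hrel (Complex.re_le_norm _)
  have hloginv : Real.log (1 / Real.cos (b * M)) = -Real.log (Real.cos (b * M)) := by
    rw [one_div, Real.log_inv]
  have hloginv0 : 0 ≤ Real.log (1 / Real.cos (b * M)) := by
    rw [hloginv]
    simpa using Real.log_nonpos hcos.le hcos1
  have hlog : |Real.log (‖l z‖)|
      ≤ A + K + Real.log (1 / Real.cos (b * M)) := by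
    rw [abs_le]
    constructor
    · have h1 : Real.log (Real.exp (-(A + K)) * Real.cos (b * M))
          ≤ Real.log (‖l z‖) :=
        Real.log_le_log (mul_pos (Real.exp_pos _) hcos) hlower
      rw [Real.log_mul (Real.exp_pos _).ne' hcos.ne', Real.log_exp] at h1
      rw [hloginv]
      linarith
    · have h1 : Real.log (‖l z‖) ≤ Real.log (Real.exp (A + K)) :=
        Real.log_le_log habs_pos hupper
      rw [Real.log_exp] at h1
      linarith
  have harg : |Complex.arg (l z)| ≤ Real.pi / 2 :=
    Complex.abs_arg_le_pi_div_two_iff.mpr hwre.le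
  have hfin := Complex.norm_le_abs_re_add_abs_im (Complex.log (l z))
  rw [Complex.log_re, Complex.log_im] at hfin
  calc ‖Complex.log (l z)‖
      ≤ |Real.log (‖l z‖)| + |Complex.arg (l z)| := hfin
    _ ≤ (A + K + Real.log (1 / Real.cos (b * M))) + Real.pi / 2 :=
        add_le_add hlog harg
    _ = A + K + Real.log (1 / Real.cos (b * M)) + Real.pi / 2 := by ring
end
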